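/- Consider a finite list whose positions are each colored red, blue, or black. The minimum length of a valid sequence of adjacent transpositions (one after which every red element occurs below every blue element) equals Σ_{r red} B(r) + Σ_{j black} min{B(j), R(j)}, where B(x) is the number of blue elements below x in the original list and R(x) is the number of red elements above x in the original list. -/

import Mathlib

/-- The three colors. -/
inductive Col : Type
  | red
  | blue
  | black
deriving DecidableEq

/-- `l'` is obtained from `l` by one adjacent transposition (swap). -/
def AdjSwap {γ : Type*} (l l' : List γ) : Prop :=
  ∃ (p s : List γ) (x y : γ), l = p ++ x :: y :: s ∧ l' = p ++ y :: x :: s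

/-- `SwapSeqL k l l'` : `l'` is obtained from `l` by a sequence of `k`
adjacent transpositions. -/
def SwapSeqL {γ : Type*} : ℕ → List γ → List γ → Prop
  | 0, l, l' => l' = l
  | k + 1, l, l' => ∃ l'', AdjSwap l l'' ∧ SwapSeqL k l'' l'

/-- We represent the original list `(a₁, …, a_d)` by `List.finRange d`
(element `x : Fin d` starts at position `x`), with colors `color : Fin d → Col`.
`Bcnt color x` is the number of blue elements below (after) `x` in the
original list. -/
def Bcnt {d : ℕ} (color : Fin d → Col) (x : Fin d) : ℕ :=
  (Finset.univ.filter (fun y => color y = Col.blue ∧ x < y)).card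

/-- `Rcnt color x` is the number of red elements above (before) `x` in the
original list. -/
def Rcnt {d : ℕ} (color : Fin d → Col) (x : Fin d) : ℕ :=
  (Finset.univ.filter (fun y => color y = Col.red ∧ y < x)).card

/-!
Every adjacent swap reverses the relative order of a single pair, so after `k` swaps at most `k`
pairs of the original order are inverted. In a valid final list every red element has been
inverted with each blue element after it, and every black element `j` either with each blue
element after it or with each red element before it: if some blue element after `j` stays after
it, every red element before `j` ends up after that blue one. These pair sets are disjoint, which
gives the lower bound. Conversely, stably moving the red elements and the black ones with
`B ≤ R` to the end costs exactly the number of pairs out of order, and each such pair is charged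
to a red or black element in the same way; no black element with `B ≤ R` precedes one with
`B > R`, since `B` decreases and `R` increases along the list.
-/

open Finset

section Swaps

variable {γ : Type*}

theorem SwapSeqL.trans {k k' : ℕ} {l m n : List γ} (h : SwapSeqL k l m)
    (h' : SwapSeqL k' m n) : SwapSeqL (k + k') l n := by
  induction k generalizing l with
  | zero =>
    obtain rfl : m = l := h
    simpa using h'
  | succ k ih =>
    obtain ⟨l'', hs, ht⟩ := h
    rw [Nat.add_right_comm]
    exact ⟨l'', hs, ih ht⟩

theorem AdjSwap.cons {l l' : List γ} (a : γ) (h : AdjSwap l l') : AdjSwap (a :: l) (a :: l') := by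
  obtain ⟨p, s, x, y, rfl, rfl⟩ := h
  exact ⟨a :: p, s, x, y, rfl, rfl⟩

theorem SwapSeqL.cons {k : ℕ} {l l' : List γ} (a : γ) (h : SwapSeqL k l l') :
    SwapSeqL k (a :: l) (a :: l') := by
  induction k generalizing l with
  | zero =>
    obtain rfl : l' = l := h
    rfl
  | succ k ih =>
    obtain ⟨l'', hs, ht⟩ := h
    exact ⟨a :: l'', hs.cons a, ih ht⟩

theorem swapSeqL_cons_append (a : γ) (u v : List γ) :
    SwapSeqL u.length (a :: (u ++ v)) (u ++ a :: v) := by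
  induction u with
  | nil => rfl
  | cons b u ih => exact ⟨b :: a :: (u ++ v), ⟨[], u ++ v, a, b, rfl, rfl⟩, ih.cons b⟩

/-- The number of pairs of positions `i < j` with `p l[i]` and `¬ p l[j]`. -/
def partitionInv (p : γ → Bool) : List γ → ℕ
  | [] => 0
  | a :: t => (if p a then t.countP (fun x => !p x) else 0) + partitionInv p t

theorem swapSeqL_partition (p : γ → Bool) (l : List γ) :
    SwapSeqL (partitionInv p l) l (l.filter (fun x => !p x) ++ l.filter p) := by
  induction l with
  | nil => rfl
  | cons a t ih =>
    by_cases hpa : p a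
    · have hmove := (ih.cons a).trans
        (swapSeqL_cons_append a (t.filter (fun x => !p x)) (t.filter p))
      rw [← List.countP_eq_length_filter, Nat.add_comm] at hmove
      simpa [partitionInv, List.filter_cons, hpa] using hmove
    · simpa [partitionInv, List.filter_cons, hpa] using ih.cons a

end Swaps

theorem partitionInv_eq_sum {α : Type*} [LinearOrder α] (p : α → Bool) {l : List α}
    (hl : l.Pairwise (· < ·)) :
    partitionInv p l =
      ∑ x ∈ l.toFinset, #{y ∈ l.toFinset | x < y ∧ p x = true ∧ p y = false} := by
  induction l with
  | nil => rfl
  | cons a t ih =>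
    obtain ⟨ha, ht⟩ := List.pairwise_cons.1 hl
    have hat : a ∉ t.toFinset := fun h => lt_irrefl a (ha a (List.mem_toFinset.1 h))
    rw [List.toFinset_cons, sum_insert hat, partitionInv, ih ht]
    congr 1
    · simp only [filter_insert, lt_irrefl, false_and, if_false]
      by_cases hpa : p a
      · rw [if_pos hpa, List.countP_eq_length_filter,
          ← List.toFinset_card_of_nodup ((ht.imp ne_of_lt).filter _), List.toFinset_filter]
        congr 1
        exact filter_congr fun y hy => by simp [hpa, ha y (List.mem_toFinset.1 hy)]
      · simp [hpa]
    · refine sum_congr rfl fun x hx => ?_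
      rw [filter_insert, if_neg fun h => lt_asymm h.1 (ha x (List.mem_toFinset.1 hx))]

theorem partitionInv_finRange {d : ℕ} (p : Fin d → Bool) :
    partitionInv p (List.finRange d) =
      #{q : Fin d × Fin d | q.1 < q.2 ∧ p q.1 = true ∧ p q.2 = false} := by
  rw [partitionInv_eq_sum p (List.pairwise_lt_finRange d), List.toFinset_finRange]
  simp only [card_filter, Fintype.sum_prod_type]

section Inversions

variable {α : Type*} [LinearOrder α]

theorem idxOf_append_cons_cons_cases {p s : List α} {x y : α} (hxy : x ≠ y) (w : α) :
    let i := (p ++ x :: y :: s).idxOf w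
    let j := (p ++ y :: x :: s).idxOf w
    (j = i ∧ (i < p.length ∨ p.length + 2 ≤ i)) ∨
      (w = x ∧ i = p.length ∧ j = p.length + 1) ∨
      (w = y ∧ i = p.length + 1 ∧ j = p.length) := by
  intro i j
  by_cases hwp : w ∈ p
  · left
    simp [i, j, List.idxOf_append_of_mem hwp, List.idxOf_lt_length_iff.2 hwp]
  · simp only [i, j, List.idxOf_append_of_notMem hwp]
    rcases eq_or_ne w x with rfl | hwx
    · simp [List.idxOf_cons_ne _ hxy.symm]
    rcases eq_or_ne w y with rfl | hwy
    · simp [List.idxOf_cons_ne _ hxy]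
    · simp [List.idxOf_cons_ne _ hwx.symm, List.idxOf_cons_ne _ hwy.symm, hwx, hwy]

theorem idxOf_lt_idxOf_of_adjSwap {p s : List α} {x y u v : α}
    (hxy : ¬(u = x ∧ v = y)) (hyx : ¬(u = y ∧ v = x))
    (h : (p ++ y :: x :: s).idxOf v < (p ++ y :: x :: s).idxOf u) :
    (p ++ x :: y :: s).idxOf v < (p ++ x :: y :: s).idxOf u := by
  rcases eq_or_ne x y with rfl | hne
  · exact h
  rcases idxOf_append_cons_cons_cases (p := p) (s := s) hne u with
    ⟨hu, hu'⟩ | ⟨rfl, hu, hu'⟩ | ⟨rfl, hu, hu'⟩ <;>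
  rcases idxOf_append_cons_cons_cases (p := p) (s := s) hne v with
    ⟨hv, hv'⟩ | ⟨rfl, hv, hv'⟩ | ⟨rfl, hv, hv'⟩ <;>
  simp_all <;> omega

variable [Fintype α]

def inversions (l : List α) : Finset (α × α) :=
  {q | q.1 < q.2 ∧ l.idxOf q.2 < l.idxOf q.1}

theorem AdjSwap.card_inversions_le {l l' : List α} (h : AdjSwap l l') :
    #(inversions l') ≤ #(inversions l) + 1 := by
  obtain ⟨p, s, x, y, rfl, rfl⟩ := h
  have hnew : inversions (p ++ y :: x :: s) \ inversions (p ++ x :: y :: s) ⊆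
      {(min x y, max x y)} := by
    rintro ⟨u, v⟩ hq
    simp only [inversions, mem_sdiff, mem_filter, mem_univ, true_and, not_and] at hq
    obtain ⟨⟨huv, hidx⟩, hold⟩ := hq
    have : (u = x ∧ v = y) ∨ (u = y ∧ v = x) := by
      by_contra! hne
      exact hold huv (idxOf_lt_idxOf_of_adjSwap (fun h => hne.1 h.1 h.2)
        (fun h => hne.2 h.1 h.2) hidx)
    rcases this with ⟨rfl, rfl⟩ | ⟨rfl, rfl⟩
    · simp [huv.le]
    · simp [huv.le]
  calc #(inversions (p ++ y :: x :: s))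
      ≤ #(inversions (p ++ y :: x :: s) \ inversions (p ++ x :: y :: s)) +
          #(inversions (p ++ x :: y :: s)) := card_le_card_sdiff_add_card
    _ ≤ 1 + #(inversions (p ++ x :: y :: s)) := by
      gcongr
      exact (card_le_card hnew).trans (card_singleton _).le
    _ = _ := Nat.add_comm _ _

theorem SwapSeqL.card_inversions_le {k : ℕ} {l l' : List α} (h : SwapSeqL k l l') :
    #(inversions l') ≤ #(inversions l) + k := by
  induction k generalizing l with
  | zero =>
    obtain rfl : l' = l := h
    rfl
  | succ k ih =>
    obtain ⟨l'', hs, ht⟩ := h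
    have := hs.card_inversions_le
    have := ih ht
    omega

end Inversions

theorem inversions_finRange (d : ℕ) : inversions (List.finRange d) = ∅ := by
  ext q
  simp only [inversions, mem_filter, mem_univ, true_and, List.idxOf_finRange, Fin.val_fin_lt,
    notMem_empty, iff_false, not_and]
  exact fun h => lt_asymm h

section Colors

variable {d : ℕ} (color : Fin d → Col)

def blueAfter (x : Fin d) : Finset (Fin d) := {y | color y = Col.blue ∧ x < y}

def redBefore (x : Fin d) : Finset (Fin d) := {y | color y = Col.red ∧ y < x}

theorem Bcnt_antitone : Antitone (Bcnt color) := fun _ _ hxy =>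
  card_le_card fun _ hz => by
    simp only [mem_filter, mem_univ, true_and] at hz ⊢
    exact ⟨hz.1, hxy.trans_lt hz.2⟩

theorem Rcnt_monotone : Monotone (Rcnt color) := fun _ _ hxy =>
  card_le_card fun _ hz => by
    simp only [mem_filter, mem_univ, true_and] at hz ⊢
    exact ⟨hz.1, hz.2.trans_le hxy⟩

def swapCost (x : Fin d) : ℕ :=
  match color x with
  | Col.red => Bcnt color x
  | Col.blue => 0
  | Col.black => min (Bcnt color x) (Rcnt color x)

theorem sum_swapCost :
    ∑ x, swapCost color x =
      (univ.filter (fun x => color x = Col.red)).sum (fun x => Bcnt color x) +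
        (univ.filter (fun x => color x = Col.black)).sum
          (fun x => min (Bcnt color x) (Rcnt color x)) := by
  rw [sum_filter, sum_filter, ← sum_add_distrib]
  refine sum_congr rfl fun x _ => ?_
  cases h : color x <;> simp [swapCost, h]

def chargedPairs (c : Fin d → Bool) (x : Fin d) : Finset (Fin d × Fin d) :=
  match color x with
  | Col.red => {x} ×ˢ blueAfter color x
  | Col.blue => ∅
  | Col.black => if c x then {x} ×ˢ blueAfter color x else redBefore color x ×ˢ {x}

variable {color}

theorem Bcnt_eq_card_blueAfter (x : Fin d) : Bcnt color x = #(blueAfter color x) := rfl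

theorem Rcnt_eq_card_redBefore (x : Fin d) : Rcnt color x = #(redBefore color x) := rfl

theorem swapCost_le_card_chargedPairs (c : Fin d → Bool) (x : Fin d) :
    swapCost color x ≤ #(chargedPairs color c x) := by
  cases h : color x <;> by_cases hc : c x <;>
    simp [swapCost, chargedPairs, h, hc, Bcnt_eq_card_blueAfter,
      Rcnt_eq_card_redBefore]

theorem card_chargedPairs_Bcnt_le_Rcnt (x : Fin d) :
    #(chargedPairs color (fun y => decide (Bcnt color y ≤ Rcnt color y)) x) =
      swapCost color x := by
  cases h : color x
  · simp [swapCost, chargedPairs, h, Bcnt_eq_card_blueAfter]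
  · simp [swapCost, chargedPairs, h]
  · simp only [swapCost, chargedPairs, h]
    rcases le_or_gt (Bcnt color x) (Rcnt color x) with hBR | hBR
    · rw [if_pos (decide_eq_true hBR), min_eq_left hBR, card_product, card_singleton, one_mul]
      rfl
    · rw [if_neg (by simpa using hBR), min_eq_right hBR.le, card_product, card_singleton,
        mul_one]
      rfl

theorem mem_chargedPairs {c : Fin d → Bool} {x : Fin d} {q : Fin d × Fin d}
    (hq : q ∈ chargedPairs color c x) :
    color x ≠ Col.blue ∧
      ((q.1 = x ∧ color q.2 = Col.blue) ∨ (color q.1 = Col.red ∧ q.2 = x)) := by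
  cases h : color x <;> simp only [chargedPairs, h] at hq <;>
    [skip; simp at hq; split_ifs at hq] <;>
    simp only [mem_product, mem_singleton, blueAfter, redBefore, mem_filter, mem_univ,
      true_and] at hq <;>
    simp [hq]

theorem pairwiseDisjoint_chargedPairs (c : Fin d → Bool) :
    ((univ : Finset (Fin d)) : Set (Fin d)).PairwiseDisjoint (chargedPairs color c) := by
  intro x _ y _ hxy
  refine disjoint_left.2 fun q hqx hqy => ?_
  obtain ⟨hx, hqx⟩ := mem_chargedPairs hqx
  obtain ⟨hy, hqy⟩ := mem_chargedPairs hqy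
  rcases hqx with ⟨h1, h2⟩ | ⟨h1, h2⟩ <;> rcases hqy with ⟨h3, h4⟩ | ⟨h3, h4⟩
  · exact hxy (h1.symm.trans h3)
  · exact hy (h4 ▸ h2)
  · exact hx (h2 ▸ h4)
  · exact hxy (h2.symm.trans h4)

end Colors

theorem List.idxOf_lt_idxOf_append {α : Type*} [DecidableEq α] {l₁ l₂ : List α} {a b : α}
    (ha : a ∈ l₁) (hb : b ∉ l₁) : (l₁ ++ l₂).idxOf a < (l₁ ++ l₂).idxOf b := by
  rw [List.idxOf_append_of_mem ha, List.idxOf_append_of_notMem hb]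
  exact (List.idxOf_lt_length_iff.2 ha).trans_le (Nat.le_add_right _ _)

section Bounds

variable {d : ℕ} {color : Fin d → Col}

def RedBelowBlue (color : Fin d → Col) (l : List (Fin d)) : Prop :=
  ∀ r b : Fin d, color r = Col.red → color b = Col.blue → l.idxOf b < l.idxOf r

theorem chargedPairs_subset_inversions {l : List (Fin d)} (hl : RedBelowBlue color l) (x : Fin d) :
    chargedPairs color (fun y => decide (∀ b ∈ blueAfter color y, l.idxOf b < l.idxOf y)) x ⊆
      inversions l := by
  rintro ⟨u, v⟩ hq
  simp only [inversions, mem_filter, mem_univ, true_and]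
  cases h : color x <;> simp only [chargedPairs, h] at hq
  · simp only [mem_product, mem_singleton, blueAfter, mem_filter, mem_univ, true_and] at hq
    obtain ⟨rfl, hv, huv⟩ := hq
    exact ⟨huv, hl u v h hv⟩
  · simp at hq
  · split_ifs at hq with hc
    · simp only [mem_product, mem_singleton, blueAfter, mem_filter, mem_univ, true_and] at hq
      obtain ⟨rfl, hv, huv⟩ := hq
      exact ⟨huv, of_decide_eq_true hc v (by simp [blueAfter, hv, huv])⟩
    · simp only [mem_product, mem_singleton, redBefore, mem_filter, mem_univ, true_and] at hq
      obtain ⟨⟨hu, huv⟩, rfl⟩ := hq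
      -- some blue `b` after `v` stays after it, and every red element before `v` ends up after `b`
      obtain ⟨b, hb, hvb⟩ : ∃ b ∈ blueAfter color v, l.idxOf v ≤ l.idxOf b := by
        simpa using hc
      exact ⟨huv, hvb.trans_lt (hl u b hu (mem_filter.1 hb).2.1)⟩

theorem sum_swapCost_le_card_inversions {l : List (Fin d)} (hl : RedBelowBlue color l) :
    ∑ x, swapCost color x ≤ #(inversions l) := by
  set c := fun y => decide (∀ b ∈ blueAfter color y, l.idxOf b < l.idxOf y)
  calc ∑ x, swapCost color x ≤ ∑ x, #(chargedPairs color c x) :=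
        sum_le_sum fun x _ => swapCost_le_card_chargedPairs c x
    _ = #(univ.biUnion (chargedPairs color c)) :=
        (card_biUnion (pairwiseDisjoint_chargedPairs c)).symm
    _ ≤ #(inversions l) :=
        card_le_card (biUnion_subset.2 fun x _ => chargedPairs_subset_inversions hl x)

theorem sum_swapCost_le_of_swapSeqL {k : ℕ} {l : List (Fin d)}
    (hk : SwapSeqL k (List.finRange d) l) (hl : RedBelowBlue color l) :
    ∑ x, swapCost color x ≤ k := by
  simpa [inversions_finRange] using (sum_swapCost_le_card_inversions hl).trans hk.card_inversions_le

variable (color)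

def endsLow (x : Fin d) : Bool :=
  decide (color x = Col.red ∨ (color x = Col.black ∧ Bcnt color x ≤ Rcnt color x))

theorem partitionInv_endsLow_le :
    partitionInv (endsLow color) (List.finRange d) ≤ ∑ x, swapCost color x := by
  set c := fun y => decide (Bcnt color y ≤ Rcnt color y)
  have hcover : ({q : Fin d × Fin d | q.1 < q.2 ∧ endsLow color q.1 = true ∧
      endsLow color q.2 = false} : Finset _) ⊆ univ.biUnion (chargedPairs color c) := by
    rintro ⟨x, y⟩ hq
    simp only [endsLow, mem_filter, mem_univ, true_and, decide_eq_true_eq,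
      decide_eq_false_iff_not, not_or, not_and, not_le] at hq
    obtain ⟨hxy, hx, hyr, hyb⟩ := hq
    rw [mem_biUnion]
    cases hcy : color y
    · exact absurd hcy hyr
    · rcases hx with hx | ⟨hx, hBR⟩
      · exact ⟨x, mem_univ _, by simp [chargedPairs, hx, blueAfter, hcy, hxy]⟩
      · exact ⟨x, mem_univ _, by simp [chargedPairs, hx, hBR, c, blueAfter, hcy, hxy]⟩
    · have hRB := hyb hcy
      rcases hx with hx | ⟨hx, hBR⟩
      · exact ⟨y, mem_univ _, by simp [chargedPairs, hcy, c, not_le.2 hRB, redBefore, hx, hxy]⟩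
      · exact absurd ((Bcnt_antitone color hxy.le).trans (hBR.trans (Rcnt_monotone color hxy.le)))
          (not_le.2 hRB)
  rw [partitionInv_finRange]
  calc _ ≤ #(univ.biUnion (chargedPairs color c)) := card_le_card hcover
    _ ≤ ∑ x, #(chargedPairs color c x) := card_biUnion_le
    _ = ∑ x, swapCost color x := sum_congr rfl fun x _ => card_chargedPairs_Bcnt_le_Rcnt x

theorem redBelowBlue_partition_endsLow :
    RedBelowBlue color ((List.finRange d).filter (fun x => !endsLow color x) ++
      (List.finRange d).filter (endsLow color)) := fun r b hr hb =>
  List.idxOf_lt_idxOf_append (by simp [endsLow, hb]) (by simp [endsLow, hr])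

end Bounds

/-- The minimum length of a sequence of adjacent transpositions
after which every red element occurs below (after) every blue element equals
`Σ_{r red} B(r) + Σ_{j black} min (B j) (R j)`. -/
theorem min_swaps_red_below_blue (d : ℕ) (color : Fin d → Col) :
    IsLeast {k : ℕ | ∃ l' : List (Fin d), SwapSeqL k (List.finRange d) l' ∧
        ∀ r b : Fin d, color r = Col.red → color b = Col.blue →
          l'.idxOf b < l'.idxOf r}
      ((Finset.univ.filter (fun x => color x = Col.red)).sum (fun x => Bcnt color x) +
        (Finset.univ.filter (fun x => color x = Col.black)).sum
          (fun x => min (Bcnt color x) (Rcnt color x))) := by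
  rw [← sum_swapCost]
  have hk := swapSeqL_partition (endsLow color) (List.finRange d)
  have hvalid := redBelowBlue_partition_endsLow color
  have heq := le_antisymm (partitionInv_endsLow_le color) (sum_swapCost_le_of_swapSeqL hk hvalid)
  exact ⟨⟨_, heq ▸ hk, hvalid⟩,
    fun _ ⟨_, hk', hl⟩ => sum_swapCost_le_of_swapSeqL hk' hl⟩
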